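/- arXiv:2205.08700 — 3 statements merged into one kernel-verified Lean document; each statement's English description precedes it below -/
import Mathlib

section
/- Let A, B, C ∈ 𝔰𝔩(4,ℝ) be pairwise-commuting. The map ∇ defined by the Koszul formula satisfies: (i) ∇_X Y = 0 for X, Y ∈ 𝔞; (ii) ∇_X Y = A(M_X) Y for X ∈ 𝔞, Y ∈ 𝔫, where for X = λ₁e₁ + λ₂e₂ + λ₇e₇ one sets M_X := λ₁B + λ₂C + λ₇A; (iii) ∇_X Y = −S(M_Y) X for X ∈ 𝔫, Y ∈ 𝔞; (iv) ∇_X Y = ⟨S(B)X, Y⟩ e₁ + ⟨S(C)X, Y⟩ e₂ + ⟨S(A)X, Y⟩ e₇ for X, Y ∈ 𝔫. Here S(M) := (M + Mᵀ)/2 and A(M) := (M − Mᵀ)/2. -/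
open Matrix

noncomputable section

/-- Standard basis vector `e_{i+1}` of `ℝ⁷` (index `0 ↔ e₁`, …, `6 ↔ e₇`). -/
def E (i : Fin 7) : Fin 7 → ℝ := Pi.single i 1

/-- The standard inner product on `ℝ⁷` for which `e₁, …, e₇` is orthonormal. -/
def inner7 (X Y : Fin 7 → ℝ) : ℝ := ∑ i, X i * Y i

/-- The component of `X ∈ ℝ⁷` in `𝔫 = span{e₃,e₄,e₅,e₆} ≅ ℝ⁴`. -/
def nPart (X : Fin 7 → ℝ) : Fin 4 → ℝ := fun i => X ⟨i.val + 2, by omega⟩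

/-- The inclusion `ℝ⁴ ≅ 𝔫 = span{e₃,e₄,e₅,e₆} ⊆ ℝ⁷`. -/
def emb (w : Fin 4 → ℝ) : Fin 7 → ℝ :=
  fun j => if h : 2 ≤ j.val ∧ j.val ≤ 5 then w ⟨j.val - 2, by omega⟩ else 0

/-- For `X = λ₁e₁ + λ₂e₂ + λ₇e₇ (+ 𝔫-part)`, the matrix `M_X = λ₁B + λ₂C + λ₇A`. -/
def MX (A B C : Matrix (Fin 4) (Fin 4) ℝ) (X : Fin 7 → ℝ) : Matrix (Fin 4) (Fin 4) ℝ :=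
  X 0 • B + X 1 • C + X 6 • A

/-- The bilinear antisymmetric bracket on `ℝ⁷` determined by `[𝔞,𝔞] = 0`, `[𝔫,𝔫] = 0`,
`[e₇,v] = Av`, `[e₁,v] = Bv`, `[e₂,v] = Cv` for `v ∈ 𝔫` and `[v,eₖ] = −[eₖ,v]`,
where `𝔞 = span{e₁,e₂,e₇}` and `𝔫 = span{e₃,e₄,e₅,e₆}`. -/
def bracket (A B C : Matrix (Fin 4) (Fin 4) ℝ) (X Y : Fin 7 → ℝ) : Fin 7 → ℝ :=
  emb ((MX A B C X).mulVec (nPart Y) - (MX A B C Y).mulVec (nPart X))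

/-- The symmetric part `S(M) = (M + Mᵀ)/2` of a matrix. -/
def symPart (M : Matrix (Fin 4) (Fin 4) ℝ) : Matrix (Fin 4) (Fin 4) ℝ :=
  (1/2 : ℝ) • (M + Mᵀ)

/-- The antisymmetric part `A(M) = (M − Mᵀ)/2` of a matrix. -/
def skewPart (M : Matrix (Fin 4) (Fin 4) ℝ) : Matrix (Fin 4) (Fin 4) ℝ :=
  (1/2 : ℝ) • (M - Mᵀ)

/-- `𝔞 = span{e₁,e₂,e₇} ⊆ ℝ⁷`. -/
def aSub : Submodule ℝ (Fin 7 → ℝ) := Submodule.span ℝ {E 0, E 1, E 6}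

/-- `𝔫 = span{e₃,e₄,e₅,e₆} ⊆ ℝ⁷`. -/
def nSub : Submodule ℝ (Fin 7 → ℝ) := Submodule.span ℝ {E 2, E 3, E 4, E 5}

/-- `∇` satisfies the Koszul formula
`⟨∇_X Y, Z⟩ = ½(⟨[X,Y],Z⟩ − ⟨[Y,Z],X⟩ + ⟨[Z,X],Y⟩)`. -/
def IsKoszul (A B C : Matrix (Fin 4) (Fin 4) ℝ)
    (nabla : (Fin 7 → ℝ) → (Fin 7 → ℝ) → (Fin 7 → ℝ)) : Prop :=
  ∀ X Y Z, inner7 (nabla X Y) Z =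
    (1/2 : ℝ) * (inner7 (bracket A B C X Y) Z - inner7 (bracket A B C Y Z) X
      + inner7 (bracket A B C Z X) Y)

/-- The wedge `e^{(i+1)(j+1)(k+1)}` of dual basis elements of `(ℝ⁷)*`, as a 3-form. -/
def w3 (i j k : Fin 7) (X Y Z : Fin 7 → ℝ) : ℝ :=
  Matrix.det !![X i, X j, X k; Y i, Y j, Y k; Z i, Z j, Z k]

/-- The wedge `e^{(i+1)(j+1)(k+1)(l+1)}` of dual basis elements of `(ℝ⁷)*`, as a 4-form. -/
def w4 (i j k l : Fin 7) (X Y Z W : Fin 7 → ℝ) : ℝ :=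
  Matrix.det !![X i, X j, X k, X l; Y i, Y j, Y k, Y l; Z i, Z j, Z k, Z l;
    W i, W j, W k, W l]

/-- The `G₂`-structure 3-form `φ = e¹²⁷ + e³⁴⁷ + e⁵⁶⁷ + e¹³⁵ − e¹⁴⁶ − e²³⁶ − e²⁴⁵`. -/
def phi (X Y Z : Fin 7 → ℝ) : ℝ :=
  w3 0 1 6 X Y Z + w3 2 3 6 X Y Z + w3 4 5 6 X Y Z + w3 0 2 4 X Y Z
    - w3 0 3 5 X Y Z - w3 1 2 5 X Y Z - w3 1 3 4 X Y Z

/-- The dual 4-form `ψ = e³⁴⁵⁶ + e¹²⁵⁶ + e¹²³⁴ − e²⁴⁶⁷ + e²³⁵⁷ + e¹⁴⁵⁷ + e¹³⁶⁷`. -/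
def psi (X Y Z W : Fin 7 → ℝ) : ℝ :=
  w4 2 3 4 5 X Y Z W + w4 0 1 4 5 X Y Z W + w4 0 1 2 3 X Y Z W - w4 1 3 5 6 X Y Z W
    + w4 1 2 4 6 X Y Z W + w4 0 3 4 6 X Y Z W + w4 0 2 5 6 X Y Z W

/-- `T : ℝ⁷ → ℝ⁷` is a full torsion tensor of `(𝔤_{A,B,C}, φ)`: `∇_X φ = ι_{T(X)} ψ`
for all `X`, where `(∇_X φ)(Y,Z,W) = −φ(∇_X Y,Z,W) − φ(Y,∇_X Z,W) − φ(Y,Z,∇_X W)`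
and `(ι_V ψ)(Y,Z,W) = ψ(V,Y,Z,W)`. -/
def IsFullTorsion (nabla : (Fin 7 → ℝ) → (Fin 7 → ℝ) → (Fin 7 → ℝ))
    (T : (Fin 7 → ℝ) → (Fin 7 → ℝ)) : Prop :=
  ∀ X Y Z W, -phi (nabla X Y) Z W - phi Y (nabla X Z) W - phi Y Z (nabla X W)
    = psi (T X) Y Z W

/-- `T(X,Y) := ⟨T(X),Y⟩`. -/
def Tbil (T : (Fin 7 → ℝ) → (Fin 7 → ℝ)) (X Y : Fin 7 → ℝ) : ℝ := inner7 (T X) Y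

/-- The divergence of `T`, determined by
`⟨div T, e_j⟩ = −∑ᵢ T(∇_{e_i}e_i, e_j) − ∑ᵢ T(e_i, ∇_{e_i}e_j)`. -/
def divT (nabla : (Fin 7 → ℝ) → (Fin 7 → ℝ) → (Fin 7 → ℝ))
    (T : (Fin 7 → ℝ) → (Fin 7 → ℝ)) : Fin 7 → ℝ :=
  fun j => -∑ i, Tbil T (nabla (E i) (E i)) (E j) - ∑ i, Tbil T (E i) (nabla (E i) (E j))

end

/-!
Every term of the Koszul formula is a bracket, and a bracket only pairs an `𝔞`-vector (through
`M_X`) with an `𝔫`-vector (through `nPart`). Testing `∇_X Y` against an arbitrary `Z` therefore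
leaves, in each of the four cases, at most two surviving terms of the form `(M v) ⬝ᵥ w` and
`(M w) ⬝ᵥ v`, whose half-sum or half-difference is `(S(M) v) ⬝ᵥ w` or `(A(M) v) ⬝ᵥ w`.
-/

theorem apply_eq_zero_of_mem_span {ι R : Type*} [Semiring R] {s : Set (ι → R)} {j : ι}
    (h : ∀ v ∈ s, v j = 0) {X : ι → R} (hX : X ∈ Submodule.span R s) : X j = 0 :=
  (Submodule.span_le (p := LinearMap.ker (LinearMap.proj j))).2 h hX

theorem transpose_mulVec_dotProduct {n R : Type*} [Fintype n] [CommSemiring R]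
    (M : Matrix n n R) (v w : n → R) : (Mᵀ *ᵥ v) ⬝ᵥ w = (M *ᵥ w) ⬝ᵥ v := by
  rw [mulVec_transpose, ← dotProduct_mulVec, dotProduct_comm]

theorem symPart_mulVec_dotProduct (M : Matrix (Fin 4) (Fin 4) ℝ) (v w : Fin 4 → ℝ) :
    (symPart M *ᵥ v) ⬝ᵥ w = (1 / 2 : ℝ) * ((M *ᵥ v) ⬝ᵥ w + (M *ᵥ w) ⬝ᵥ v) := by
  rw [symPart, smul_mulVec, smul_dotProduct, add_mulVec, add_dotProduct,
    transpose_mulVec_dotProduct, smul_eq_mul]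

theorem skewPart_mulVec_dotProduct (M : Matrix (Fin 4) (Fin 4) ℝ) (v w : Fin 4 → ℝ) :
    (skewPart M *ᵥ v) ⬝ᵥ w = (1 / 2 : ℝ) * ((M *ᵥ v) ⬝ᵥ w - (M *ᵥ w) ⬝ᵥ v) := by
  rw [skewPart, smul_mulVec, smul_dotProduct, sub_mulVec, sub_dotProduct,
    transpose_mulVec_dotProduct, smul_eq_mul]

theorem inner7_eq_dotProduct (X Y : Fin 7 → ℝ) : inner7 X Y = X ⬝ᵥ Y := rfl

theorem inner7_ext {U V : Fin 7 → ℝ} (h : ∀ Z, inner7 U Z = inner7 V Z) : U = V :=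
  dotProduct_eq U V h

theorem inner7_emb (w : Fin 4 → ℝ) (Z : Fin 7 → ℝ) : inner7 (emb w) Z = w ⬝ᵥ nPart Z := by
  simp [inner7, emb, nPart, dotProduct, Fin.sum_univ_seven, Fin.sum_univ_four]

theorem nPart_eq_zero_of_mem_aSub {X : Fin 7 → ℝ} (hX : X ∈ aSub) : nPart X = 0 := by
  funext i
  show X _ = 0
  refine apply_eq_zero_of_mem_span (fun v hv => ?_) hX
  rcases hv with rfl | rfl | rfl <;> fin_cases i <;> rfl

theorem MX_eq_zero_of_mem_nSub (A B C : Matrix (Fin 4) (Fin 4) ℝ) {Y : Fin 7 → ℝ}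
    (hY : Y ∈ nSub) : MX A B C Y = 0 := by
  have hcoord (j : Fin 7) (hj : j = 0 ∨ j = 1 ∨ j = 6) : Y j = 0 :=
    apply_eq_zero_of_mem_span (fun v hv => by
      rcases hv with rfl | rfl | rfl | rfl <;> rcases hj with rfl | rfl | rfl <;> rfl) hY
  simp [MX, hcoord 0 (by simp), hcoord 1 (by simp), hcoord 6 (by simp)]

namespace IsKoszul

variable {A B C : Matrix (Fin 4) (Fin 4) ℝ}
  {nabla : (Fin 7 → ℝ) → (Fin 7 → ℝ) → (Fin 7 → ℝ)}

local notation "M" => MX A B C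

theorem inner7_apply (hK : IsKoszul A B C nabla) (X Y Z : Fin 7 → ℝ) :
    inner7 (nabla X Y) Z = (1 / 2 : ℝ) *
      ((M X *ᵥ nPart Y - M Y *ᵥ nPart X) ⬝ᵥ nPart Z
        - (M Y *ᵥ nPart Z - M Z *ᵥ nPart Y) ⬝ᵥ nPart X
        + (M Z *ᵥ nPart X - M X *ᵥ nPart Z) ⬝ᵥ nPart Y) := by
  rw [hK]
  simp only [bracket, inner7_emb]

theorem apply_aSub_aSub (hK : IsKoszul A B C nabla) {X Y : Fin 7 → ℝ}
    (hX : X ∈ aSub) (hY : Y ∈ aSub) : nabla X Y = 0 :=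
  inner7_ext fun Z => by
    simp [hK.inner7_apply, nPart_eq_zero_of_mem_aSub hX, nPart_eq_zero_of_mem_aSub hY,
      inner7_eq_dotProduct]

theorem apply_aSub_nSub (hK : IsKoszul A B C nabla) {X Y : Fin 7 → ℝ}
    (hX : X ∈ aSub) (hY : Y ∈ nSub) : nabla X Y = emb (skewPart (M X) *ᵥ nPart Y) :=
  inner7_ext fun Z => by
    rw [hK.inner7_apply, inner7_emb, skewPart_mulVec_dotProduct, nPart_eq_zero_of_mem_aSub hX,
      MX_eq_zero_of_mem_nSub A B C hY]
    simp only [mulVec_zero, zero_mulVec, sub_zero, zero_sub, dotProduct_zero,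
      neg_dotProduct]
    ring

theorem apply_nSub_aSub (hK : IsKoszul A B C nabla) {X Y : Fin 7 → ℝ}
    (hX : X ∈ nSub) (hY : Y ∈ aSub) : nabla X Y = -emb (symPart (M Y) *ᵥ nPart X) :=
  inner7_ext fun Z => by
    rw [hK.inner7_apply, inner7_eq_dotProduct, neg_dotProduct, ← inner7_eq_dotProduct,
      inner7_emb, symPart_mulVec_dotProduct, nPart_eq_zero_of_mem_aSub hY,
      MX_eq_zero_of_mem_nSub A B C hX]
    simp only [mulVec_zero, zero_mulVec, sub_zero, zero_sub, dotProduct_zero,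
      neg_dotProduct]
    ring

theorem apply_nSub_nSub (hK : IsKoszul A B C nabla) {X Y : Fin 7 → ℝ}
    (hX : X ∈ nSub) (hY : Y ∈ nSub) :
    nabla X Y = ((symPart B *ᵥ nPart X) ⬝ᵥ nPart Y) • E 0
      + ((symPart C *ᵥ nPart X) ⬝ᵥ nPart Y) • E 1
      + ((symPart A *ᵥ nPart X) ⬝ᵥ nPart Y) • E 6 :=
  inner7_ext fun Z => by
    rw [hK.inner7_apply, MX_eq_zero_of_mem_nSub A B C hX, MX_eq_zero_of_mem_nSub A B C hY]
    simp only [inner7_eq_dotProduct, E, add_dotProduct, smul_dotProduct, single_dotProduct,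
      symPart_mulVec_dotProduct, MX, add_mulVec, smul_mulVec, zero_mulVec, sub_self, sub_zero,
      zero_dotProduct, zero_sub, neg_dotProduct, smul_eq_mul]
    ring

end IsKoszul

theorem leviCivita_formulas_general (A B C : Matrix (Fin 4) (Fin 4) ℝ)
    (nabla : (Fin 7 → ℝ) → (Fin 7 → ℝ) → (Fin 7 → ℝ))
    (hK : IsKoszul A B C nabla) :
    (∀ X ∈ aSub, ∀ Y ∈ aSub, nabla X Y = 0) ∧
    (∀ X ∈ aSub, ∀ Y ∈ nSub,
      nabla X Y = emb ((skewPart (MX A B C X)).mulVec (nPart Y))) ∧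
    (∀ X ∈ nSub, ∀ Y ∈ aSub,
      nabla X Y = -emb ((symPart (MX A B C Y)).mulVec (nPart X))) ∧
    (∀ X ∈ nSub, ∀ Y ∈ nSub,
      nabla X Y = (((symPart B).mulVec (nPart X)) ⬝ᵥ (nPart Y)) • E 0
        + (((symPart C).mulVec (nPart X)) ⬝ᵥ (nPart Y)) • E 1
        + (((symPart A).mulVec (nPart X)) ⬝ᵥ (nPart Y)) • E 6) :=
  ⟨fun _ hX _ hY => hK.apply_aSub_aSub hX hY, fun _ hX _ hY => hK.apply_aSub_nSub hX hY,
    fun _ hX _ hY => hK.apply_nSub_aSub hX hY, fun _ hX _ hY => hK.apply_nSub_nSub hX hY⟩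

/-- explicit formulas for the Levi-Civita connection `∇` of
`(𝔤_{A,B,C}, ⟨·,·⟩)` defined by the Koszul formula. -/
theorem leviCivita_formulas (A B C : Matrix (Fin 4) (Fin 4) ℝ)
    (hAB : A * B = B * A) (hAC : A * C = C * A) (hBC : B * C = C * B)
    (htA : Matrix.trace A = 0) (htB : Matrix.trace B = 0) (htC : Matrix.trace C = 0)
    (nabla : (Fin 7 → ℝ) → (Fin 7 → ℝ) → (Fin 7 → ℝ))
    (hK : IsKoszul A B C nabla) :
    (∀ X ∈ aSub, ∀ Y ∈ aSub, nabla X Y = 0) ∧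
    (∀ X ∈ aSub, ∀ Y ∈ nSub,
      nabla X Y = emb ((skewPart (MX A B C X)).mulVec (nPart Y))) ∧
    (∀ X ∈ nSub, ∀ Y ∈ aSub,
      nabla X Y = -emb ((symPart (MX A B C Y)).mulVec (nPart X))) ∧
    (∀ X ∈ nSub, ∀ Y ∈ nSub,
      nabla X Y = (((symPart B).mulVec (nPart X)) ⬝ᵥ (nPart Y)) • E 0
        + (((symPart C).mulVec (nPart X)) ⬝ᵥ (nPart Y)) • E 1
        + (((symPart A).mulVec (nPart X)) ⬝ᵥ (nPart Y)) • E 6) :=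
  leviCivita_formulas_general A B C nabla hK
end

section
/- Let A, B, C ∈ 𝔰𝔩(4,ℝ) be skew-symmetric (hence pairwise-commuting is the only extra hypothesis: assume AB=BA, AC=CA, BC=CB). Then every full torsion tensor of (𝔤_{A,B,C}, φ), i.e., every linear map T : ℝ⁷ → ℝ⁷ with ∇_X φ = ι_{T(X)}ψ for all X, has divergence zero: div T = 0. -/
/-!
Skew-symmetry of `A, B, C` makes the Koszul formula collapse to `∇_X Y = M_X Y_𝔫`: the
Levi-Civita connection takes values in `𝔫` and `∇_{eᵢ} eᵢ = 0`. Every term of `φ` has an index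
in `𝔞 = span{e₁,e₂,e₇}`, so `φ` vanishes on `𝔫³` and `∇_X φ` vanishes there as well; on `𝔫³` only
the term `e³⁴⁵⁶` of `ψ` survives, hence `T(X) ⊥ 𝔫`. In the divergence, the first sum is a multiple of
`T(0)`, which vanishes because `∇_0 = 0` and `ι_V ψ = 0` forces `V = 0`; the second pairs
`T(eᵢ) ⊥ 𝔫` with `∇_{eᵢ} e_j ∈ 𝔫`.
-/

open Matrix

theorem Matrix.mulVec_dotProduct_of_transpose_eq_neg {n : Type*} [Fintype n]
    {M : Matrix n n ℝ} (hM : Mᵀ = -M) (v w : n → ℝ) :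
    M *ᵥ v ⬝ᵥ w = -(M *ᵥ w ⬝ᵥ v) := by
  rw [dotProduct_comm, dotProduct_mulVec, ← mulVec_transpose, hM, neg_mulVec, neg_dotProduct,
    dotProduct_comm]

theorem Matrix.det_fin_four_of {R : Type*} [CommRing R] (a b c d e f g h i j k l m n o p : R) :
    det !![a, b, c, d; e, f, g, h; i, j, k, l; m, n, o, p] =
      a * (f * (k * p - l * o) - g * (j * p - l * n) + h * (j * o - k * n))
      - b * (e * (k * p - l * o) - g * (i * p - l * m) + h * (i * o - k * m))
      + c * (e * (j * p - l * n) - f * (i * p - l * m) + h * (i * n - j * m))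
      - d * (e * (j * o - k * n) - f * (i * o - k * m) + g * (i * n - j * m)) := by
  simp [det_succ_row_zero, Fin.sum_univ_succ, Fin.succAbove]
  ring

theorem inner7_comm (X Y : Fin 7 → ℝ) : inner7 X Y = inner7 Y X := by
  simp only [inner7, mul_comm]

theorem inner7_E (X : Fin 7 → ℝ) (j : Fin 7) : inner7 X (E j) = X j := by
  simp [inner7, E, Pi.single_apply]

theorem emb_zero : emb 0 = 0 := by
  funext j
  simp [emb]

theorem MX_zero (A B C : Matrix (Fin 4) (Fin 4) ℝ) : MX A B C 0 = 0 := by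
  simp [MX]

theorem MX_E_mulVec_nPart_E (A B C : Matrix (Fin 4) (Fin 4) ℝ) (i : Fin 7) :
    MX A B C (E i) *ᵥ nPart (E i) = 0 := by
  fin_cases i <;> ext k <;>
    simp [MX, nPart, E, Pi.single_apply, mulVec, dotProduct, Fin.sum_univ_four]

theorem MX_transpose {A B C : Matrix (Fin 4) (Fin 4) ℝ} (hA : Aᵀ = -A) (hB : Bᵀ = -B)
    (hC : Cᵀ = -C) (X : Fin 7 → ℝ) : (MX A B C X)ᵀ = -MX A B C X := by
  simp only [MX, transpose_add, transpose_smul, hA, hB, hC, smul_neg, neg_add]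

theorem nabla_eq_emb_mulVec {A B C : Matrix (Fin 4) (Fin 4) ℝ} (hA : Aᵀ = -A) (hB : Bᵀ = -B)
    (hC : Cᵀ = -C) {nabla : (Fin 7 → ℝ) → (Fin 7 → ℝ) → (Fin 7 → ℝ)}
    (hK : IsKoszul A B C nabla) (X Y : Fin 7 → ℝ) :
    nabla X Y = emb (MX A B C X *ᵥ nPart Y) := by
  have skew (Z : Fin 7 → ℝ) :=
    (MX A B C Z).mulVec_dotProduct_of_transpose_eq_neg (MX_transpose hA hB hC Z)
  funext j
  -- skew-symmetry cancels the last two Koszul terms and doubles the first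
  rw [← inner7_E (nabla X Y), hK, ← inner7_E (emb _), inner7_emb]
  simp only [bracket, inner7_emb, sub_dotProduct]
  linarith [skew X (nPart Y) (nPart (E j)), skew Y (nPart X) (nPart (E j)),
    skew (E j) (nPart X) (nPart Y)]

theorem phi_emb (u v w : Fin 4 → ℝ) : phi (emb u) (emb v) (emb w) = 0 := by
  simp [phi, w3, emb, det_fin_three]

theorem nPart_eq_zero_of_psi_emb {V : Fin 7 → ℝ}
    (h : ∀ u v w, psi V (emb u) (emb v) (emb w) = 0) : nPart V = 0 := by
  have h₂ := h (Pi.single 1 1) (Pi.single 2 1) (Pi.single 3 1)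
  have h₃ := h (Pi.single 0 1) (Pi.single 2 1) (Pi.single 3 1)
  have h₄ := h (Pi.single 0 1) (Pi.single 1 1) (Pi.single 3 1)
  have h₅ := h (Pi.single 0 1) (Pi.single 1 1) (Pi.single 2 1)
  simp [psi, w4, emb, det_fin_four_of] at h₂ h₃ h₄ h₅
  funext k
  fin_cases k <;> assumption

theorem eq_zero_of_psi_E {V : Fin 7 → ℝ}
    (h : ∀ a b c, psi V (E a) (E b) (E c) = 0) : V = 0 := by
  -- each triple lies in exactly one term of `ψ`, whose fourth index is the coordinate extracted
  have h₀ := h 1 4 5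
  have h₁ := h 0 4 5
  have h₂ := h 3 4 5
  have h₃ := h 2 4 5
  have h₄ := h 2 3 5
  have h₅ := h 2 3 4
  have h₆ := h 1 3 5
  simp [psi, w4, E, det_fin_four_of] at h₀ h₁ h₂ h₃ h₄ h₅ h₆
  funext k
  fin_cases k <;> assumption

section FullTorsion

variable {nabla : (Fin 7 → ℝ) → (Fin 7 → ℝ) → (Fin 7 → ℝ)} {T : (Fin 7 → ℝ) → (Fin 7 → ℝ)}

theorem IsFullTorsion.nPart_apply_eq_zero (hT : IsFullTorsion nabla T)
    (hn : ∀ X Y, nabla X Y ∈ Set.range emb) (X : Fin 7 → ℝ) : nPart (T X) = 0 := by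
  refine nPart_eq_zero_of_psi_emb fun u v w => ?_
  obtain ⟨u', hu⟩ := hn X (emb u)
  obtain ⟨v', hv⟩ := hn X (emb v)
  obtain ⟨w', hw⟩ := hn X (emb w)
  rw [← hT, ← hu, ← hv, ← hw, phi_emb, phi_emb, phi_emb, neg_zero, sub_zero, sub_zero]

theorem IsFullTorsion.apply_eq_zero (hT : IsFullTorsion nabla T) {X : Fin 7 → ℝ}
    (hX : ∀ Y, nabla X Y = 0) : T X = 0 :=
  eq_zero_of_psi_E fun a b c => by simp [← hT X, hX, phi, w3, det_fin_three]

end FullTorsion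

theorem divT_eq_zero_of_skewSymmetric_general (A B C : Matrix (Fin 4) (Fin 4) ℝ)
    (hA : Aᵀ = -A) (hB : Bᵀ = -B) (hC : Cᵀ = -C)
    (nabla : (Fin 7 → ℝ) → (Fin 7 → ℝ) → (Fin 7 → ℝ))
    (hK : IsKoszul A B C nabla)
    (T : (Fin 7 → ℝ) → (Fin 7 → ℝ)) (hT : IsFullTorsion nabla T) :
    divT nabla T = 0 := by
  have hnabla := nabla_eq_emb_mulVec hA hB hC hK
  have hT0 : T 0 = 0 :=
    hT.apply_eq_zero fun Y => by rw [hnabla, MX_zero, zero_mulVec, emb_zero]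
  have hTn : ∀ X, nPart (T X) = 0 := hT.nPart_apply_eq_zero fun X Y => ⟨_, (hnabla X Y).symm⟩
  funext j
  simp only [divT, Tbil, hnabla, MX_E_mulVec_nPart_E, emb_zero, hT0, inner7_E,
    inner7_comm _ (emb _), inner7_emb, hTn, dotProduct_zero, Pi.zero_apply,
    Finset.sum_const_zero, neg_zero, sub_zero]

/-- for skew-symmetric pairwise-commuting A, B, C, every full torsion
tensor of `(𝔤_{A,B,C}, φ)` is divergence-free. -/
theorem divT_eq_zero_of_skewSymmetric (A B C : Matrix (Fin 4) (Fin 4) ℝ)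
    (hA : Aᵀ = -A) (hB : Bᵀ = -B) (hC : Cᵀ = -C)
    (hAB : A * B = B * A) (hAC : A * C = C * A) (hBC : B * C = C * B)
    (nabla : (Fin 7 → ℝ) → (Fin 7 → ℝ) → (Fin 7 → ℝ))
    (hK : IsKoszul A B C nabla)
    (T : (Fin 7 → ℝ) → (Fin 7 → ℝ)) (hT : IsFullTorsion nabla T) :
    divT nabla T = 0 :=
  divT_eq_zero_of_skewSymmetric_general A B C hA hB hC nabla hK T hT
end

section
/- Let A, B, C ∈ 𝔰𝔩(4,ℝ) be diagonal and traceless (diagonal matrices automatically pairwise commute). Then every full torsion tensor of (𝔤_{A,B,C}, φ), i.e., every linear map T : ℝ⁷ → ℝ⁷ with ∇_X φ = ι_{T(X)}ψ for all X, has divergence zero: div T = 0. -/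
open Matrix

/-!
For diagonal `A = diag a`, `B = diag b`, `C = diag c` every `M_X` is diagonal, with entries the
weights `X₁ b_k + X₂ c_k + X₇ a_k`, so the bracket, and through the Koszul formula the connection,
have closed forms. Each coordinate of a vector `V` is, up to sign, a single contraction
`ψ(V, e_i, e_j, e_k)`, so the torsion equation determines `T` uniquely: `T` kills `𝔞` and maps `𝔫`
to `𝔫` with zero diagonal. Since `∇_{e_i} e_i ∈ 𝔞` and `∇_{e_i} e_j ∈ 𝔞 + ℝ e_i`, every term of the
divergence vanishes.
-/

section DiagonalModel

variable (a b c : Fin 4 → ℝ)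

def weight (X : Fin 7 → ℝ) (k : Fin 4) : ℝ := X 0 * b k + X 1 * c k + X 6 * a k

def leviCivitaDiag (X Y : Fin 7 → ℝ) : Fin 7 → ℝ :=
  ![∑ k, b k * nPart X k * nPart Y k, ∑ k, c k * nPart X k * nPart Y k,
    -(weight a b c Y 0 * X 2), -(weight a b c Y 1 * X 3),
    -(weight a b c Y 2 * X 4), -(weight a b c Y 3 * X 5),
    ∑ k, a k * nPart X k * nPart Y k]

def torsionDiag (X : Fin 7 → ℝ) : Fin 7 → ℝ :=
  ![0, 0, -(a 1 * X 3) - b 2 * X 4 + c 3 * X 5, a 0 * X 2 + b 3 * X 5 + c 2 * X 4,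
    -(a 3 * X 5) + b 0 * X 2 - c 1 * X 3, a 2 * X 4 - b 1 * X 3 - c 0 * X 2, 0]

end DiagonalModel

lemma inner7_E_right (X : Fin 7 → ℝ) (k : Fin 7) : inner7 X (E k) = X k := by
  simp [inner7, E, Pi.single_apply]

section Diagonal

variable {A B C : Matrix (Fin 4) (Fin 4) ℝ}

lemma MX_eq_diagonal (hA : A.IsDiag) (hB : B.IsDiag) (hC : C.IsDiag) (X : Fin 7 → ℝ) :
    MX A B C X = diagonal (weight A.diag B.diag C.diag X) := by
  ext i j
  rcases eq_or_ne i j with rfl | hij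
  · simp [MX, weight, mul_comm]
  · simp [MX, hA hij, hB hij, hC hij, hij]

lemma bracket_eq_of_isDiag (hA : A.IsDiag) (hB : B.IsDiag) (hC : C.IsDiag) (X Y : Fin 7 → ℝ) :
    bracket A B C X Y =
      emb (weight A.diag B.diag C.diag X * nPart Y - weight A.diag B.diag C.diag Y * nPart X) := by
  rw [bracket, MX_eq_diagonal hA hB hC, MX_eq_diagonal hA hB hC]
  congr 1
  ext k
  simp only [Pi.sub_apply, mulVec_diagonal, Pi.mul_apply]

lemma IsKoszul.apply_eq {nabla : (Fin 7 → ℝ) → (Fin 7 → ℝ) → (Fin 7 → ℝ)}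
    (hK : IsKoszul A B C nabla) (X Y : Fin 7 → ℝ) (k : Fin 7) :
    nabla X Y k = (1/2 : ℝ) * (bracket A B C X Y k - inner7 (bracket A B C Y (E k)) X
      + inner7 (bracket A B C (E k) X) Y) := by
  rw [← inner7_E_right (nabla X Y), hK, inner7_E_right]

lemma IsKoszul.eq_leviCivitaDiag (hA : A.IsDiag) (hB : B.IsDiag) (hC : C.IsDiag)
    {nabla : (Fin 7 → ℝ) → (Fin 7 → ℝ) → (Fin 7 → ℝ)} (hK : IsKoszul A B C nabla) :
    nabla = leviCivitaDiag A.diag B.diag C.diag := by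
  ext X Y k
  simp only [hK.apply_eq, bracket_eq_of_isDiag hA hB hC]
  fin_cases k <;>
    simp [inner7, leviCivitaDiag, weight, emb, nPart, E, Fin.sum_univ_seven, Fin.sum_univ_four] <;>
    ring

end Diagonal

set_option maxHeartbeats 1000000 in
lemma eq_vec_psi_E (V : Fin 7 → ℝ) :
    V = ![psi V (E 1) (E 2) (E 3), -psi V (E 0) (E 2) (E 3), psi V (E 0) (E 1) (E 3),
      -psi V (E 0) (E 1) (E 2), psi V (E 0) (E 1) (E 5), -psi V (E 0) (E 1) (E 4),
      -psi V (E 0) (E 2) (E 5)] := by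
  ext m
  fin_cases m <;>
    simp [psi, w4, E] <;>
    simp [det_succ_row_zero, Fin.sum_univ_succ, Fin.succAbove, pow_succ]

set_option maxHeartbeats 1000000 in
lemma IsFullTorsion.eq_torsionDiag {a b c : Fin 4 → ℝ} {T : (Fin 7 → ℝ) → (Fin 7 → ℝ)}
    (hT : IsFullTorsion (leviCivitaDiag a b c) T) : T = torsionDiag a b c := by
  ext X m
  rw [eq_vec_psi_E (T X)]
  simp only [← hT X]
  fin_cases m <;>
    simp [phi, w3, det_fin_three, E, leviCivitaDiag, torsionDiag, weight, nPart,
      Fin.sum_univ_four] <;>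
    ring

lemma divT_leviCivitaDiag_torsionDiag (a b c : Fin 4 → ℝ) :
    divT (leviCivitaDiag a b c) (torsionDiag a b c) = 0 := by
  ext j
  fin_cases j <;>
    simp [divT, Tbil, inner7, leviCivitaDiag, torsionDiag, weight, E, Fin.sum_univ_seven,
      Pi.single_apply]

theorem divT_eq_zero_of_diagonal_general (A B C : Matrix (Fin 4) (Fin 4) ℝ)
    (hA : A.IsDiag) (hB : B.IsDiag) (hC : C.IsDiag)
    (nabla : (Fin 7 → ℝ) → (Fin 7 → ℝ) → (Fin 7 → ℝ))
    (hK : IsKoszul A B C nabla)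
    (T : (Fin 7 → ℝ) → (Fin 7 → ℝ)) (hT : IsFullTorsion nabla T) :
    divT nabla T = 0 := by
  obtain rfl := hK.eq_leviCivitaDiag hA hB hC
  obtain rfl := hT.eq_torsionDiag
  exact divT_leviCivitaDiag_torsionDiag _ _ _

/-- for diagonal traceless A, B, C, every full torsion tensor of
`(𝔤_{A,B,C}, φ)` is divergence-free. -/
theorem divT_eq_zero_of_diagonal (A B C : Matrix (Fin 4) (Fin 4) ℝ)
    (hA : A.IsDiag) (hB : B.IsDiag) (hC : C.IsDiag)
    (htA : Matrix.trace A = 0) (htB : Matrix.trace B = 0) (htC : Matrix.trace C = 0)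
    (nabla : (Fin 7 → ℝ) → (Fin 7 → ℝ) → (Fin 7 → ℝ))
    (hK : IsKoszul A B C nabla)
    (T : (Fin 7 → ℝ) → (Fin 7 → ℝ)) (hT : IsFullTorsion nabla T) :
    divT nabla T = 0 :=
  divT_eq_zero_of_diagonal_general A B C hA hB hC nabla hK T hT
end
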